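/- arXiv:2509.10404 — 4 statements merged into one kernel-verified Lean document; each statement's English description precedes it below -/
import Mathlib

section
/- For all integers m, n ≥ 0, the derangement numbers satisfy D_{m+n} / n! = ∑_{l=0}^{n} ∑_{k=0}^{m} C(k+n-l-1, n-l) · C(m, k) · (-1)^{m-k} · (k!/l!) · D_l, where the identity is understood in the rational numbers. -/
/-!
The exponential generating function `G = ∑ D_p X^p / p!` of the derangement numbers is
`e^{-X} (1 - X)⁻¹`, and `D_{m+n} / n!` is the `n`-th coefficient of its `m`-th derivative.
Since `d(e^{-X} g) = e^{-X} (d - 1) g`, that derivative is `e^{-X} (d - 1)^m (1 - X)⁻¹`, and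
`d^k (1 - X)⁻¹ = k! (1 - X)^{-k-1}`; hence `G^{(m)} = ∑_k C(m,k) (-1)^{m-k} k! G (1 - X)^{-k}`,
whose `n`-th coefficient is the right-hand side because `(1 - X)^{-k}` has coefficients
`C(k+j-1, j)`.
-/

open Finset Nat

namespace PowerSeries

theorem derivative_rescale {R : Type*} [CommSemiring R] (a : R) (f : R⟦X⟧) :
    d⁄dX R (rescale a f) = a • rescale a (d⁄dX R f) := by
  ext n
  simp only [coeff_derivative, coeff_rescale, coeff_smul, pow_succ]
  ring

section InvOneSubPow

variable {S : Type*} [CommRing S]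

-- For `d = 0`, truncated subtraction gives `(n - 1).choose n`, which is `1` only at `n = 0`.
theorem coeff_invOneSubPow (d n : ℕ) :
    coeff n (invOneSubPow S d : S⟦X⟧) = (d + n - 1).choose n := by
  rcases d with _ | d
  · rcases n with _ | n <;> simp [invOneSubPow_zero, coeff_one]
  · rw [invOneSubPow_val_succ_eq_mk_add_choose, coeff_mk, add_right_comm, Nat.add_sub_cancel,
      Nat.choose_symm_add]

theorem coeff_mul_invOneSubPow (f : S⟦X⟧) (d n : ℕ) :
    coeff n (f * (invOneSubPow S d : S⟦X⟧)) =
      ∑ l ∈ range (n + 1), coeff l f * (d + n - l - 1).choose (n - l) := by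
  rw [coeff_mul, Nat.sum_antidiagonal_eq_sum_range_succ (fun l j => coeff l f * coeff j _)]
  refine sum_congr rfl fun l hl => ?_
  rw [coeff_invOneSubPow, ← Nat.add_sub_assoc (by simpa [Nat.lt_succ_iff] using hl)]

theorem iterate_derivative_invOneSubPow_one (k : ℕ) :
    (d⁄dX S)^[k] (invOneSubPow S 1 : S⟦X⟧) = (k ! : S) • (invOneSubPow S (k + 1) : S⟦X⟧) := by
  ext n
  simp only [coeff_iterate_derivative, coeff_smul, coeff_invOneSubPow,
    Nat.ascFactorial_eq_factorial_mul_choose]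
  rw [Nat.add_sub_cancel_left, Nat.choose_self, add_right_comm, Nat.add_sub_cancel, add_comm n k,
    Nat.choose_symm_add, smul_eq_mul, Nat.cast_one, mul_one, Nat.cast_mul]

end InvOneSubPow

section Exp

variable {A : Type*} [CommRing A] [Algebra ℚ A]

theorem derivative_rescale_exp (a : A) :
    d⁄dX A (rescale a (exp A)) = a • rescale a (exp A) := by
  rw [derivative_rescale, derivative_exp]

theorem derivative_rescale_exp_mul (a : A) (f : A⟦X⟧) :
    d⁄dX A (rescale a (exp A) * f) = rescale a (exp A) * (d⁄dX A f + a • f) := by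
  rw [Derivation.leibniz, derivative_rescale_exp, smul_eq_mul, smul_eq_mul, mul_smul_comm,
    mul_add, mul_smul_comm, mul_comm f]

theorem iterate_derivative_rescale_exp_mul (a : A) (f : A⟦X⟧) (m : ℕ) :
    (d⁄dX A)^[m] (rescale a (exp A) * f) =
      rescale a (exp A) * ∑ k ∈ range (m + 1), (m.choose k * a ^ (m - k)) • (d⁄dX A)^[k] f := by
  let D : Module.End A A⟦X⟧ := (d⁄dX A).toLinearMap
  have shift : ∀ j g, (d⁄dX A)^[j] (rescale a (exp A) * g) =
      rescale a (exp A) * ((D + a • 1) ^ j) g := by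
    intro j
    induction j with
    | zero => intro g; simp
    | succ j ih =>
      intro g
      rw [Function.iterate_succ_apply, derivative_rescale_exp_mul, ih, pow_succ,
        Module.End.mul_apply]
      rfl
  rw [shift, ((Commute.one_right D).smul_right a).add_pow]
  congr 1
  simp only [LinearMap.sum_apply, Module.End.mul_apply, smul_pow, one_pow,
    Module.End.natCast_apply, LinearMap.smul_apply, Module.End.one_apply, Module.End.pow_apply]
  refine sum_congr rfl fun k _ => ?_
  rw [← Module.End.pow_apply, map_smul, map_nsmul, Module.End.pow_apply,
    ← Nat.cast_smul_eq_nsmul A, smul_smul, mul_comm]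
  rfl

end Exp

theorem coeff_iterate_derivative_mk_div_factorial {K : Type*} [Field K] [CharZero K]
    (a : ℕ → K) (m n : ℕ) :
    coeff n ((d⁄dX K)^[m] (mk fun p => a p / p !)) = a (n + m) / n ! := by
  have : ((n + 1).ascFactorial m : K) ≠ 0 := by exact_mod_cast (Nat.ascFactorial_pos _ _).ne'
  rw [coeff_iterate_derivative, coeff_mk, ← Nat.factorial_mul_ascFactorial n m, Nat.cast_mul]
  field_simp

end PowerSeries

open PowerSeries

noncomputable def derangementSeries : ℚ⟦X⟧ :=
  mk fun p => (numDerangements p : ℚ) / p !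

theorem coeff_derangementSeries (p : ℕ) :
    coeff p derangementSeries = (numDerangements p : ℚ) / p ! :=
  coeff_mk _ _

theorem derangementSeries_mul_one_sub_X :
    derangementSeries * (1 - X) = rescale (-1) (exp ℚ) := by
  ext p
  rcases p with _ | p
  · simp [derangementSeries]
  · have succ : (numDerangements (p + 1) : ℚ) = (p + 1) * numDerangements p - (-1) ^ p := by
      exact_mod_cast numDerangements_succ p
    rw [mul_sub, mul_one, map_sub, coeff_succ_mul_X]
    simp only [coeff_derangementSeries, coeff_rescale, coeff_exp, succ, Nat.factorial_succ]
    push_cast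
    field_simp
    ring

theorem derangementSeries_eq :
    derangementSeries = rescale (-1) (exp ℚ) * invOneSubPow ℚ 1 := by
  rw [← derangementSeries_mul_one_sub_X, mul_assoc, ← pow_one (1 - X : ℚ⟦X⟧),
    ← invOneSubPow_inv_eq_one_sub_pow, (invOneSubPow ℚ 1).inv_val, mul_one]

theorem iterate_derivative_derangementSeries (m : ℕ) :
    (d⁄dX ℚ)^[m] derangementSeries = ∑ k ∈ range (m + 1),
      ((m.choose k : ℚ) * (-1) ^ (m - k) * k !) • (derangementSeries * invOneSubPow ℚ k) := by
  rw [derangementSeries_eq, iterate_derivative_rescale_exp_mul, mul_sum]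
  refine sum_congr rfl fun k _ => ?_
  rw [iterate_derivative_invOneSubPow_one, add_comm k, invOneSubPow_add, Units.val_mul, smul_smul,
    mul_smul_comm, ← mul_assoc (rescale _ _), mul_assoc (m.choose k : ℚ)]

/-- **Recurrence for derangement numbers** (Theorem 2.1).
For all integers `m, n ≥ 0`,
`D_{m+n} / n! = ∑_{l=0}^{n} ∑_{k=0}^{m} C(k+n-l-1, n-l) ⬝ C(m,k) ⬝ (-1)^{m-k} ⬝ (k!/l!) ⬝ D_l`
as rational numbers. -/
theorem derangement_recurrence (m n : ℕ) :
    (numDerangements (m + n) : ℚ) / (n.factorial : ℚ) =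
      ∑ l ∈ Finset.range (n + 1), ∑ k ∈ Finset.range (m + 1),
        ((k + n - l - 1).choose (n - l) : ℚ) * (m.choose k : ℚ) * (-1 : ℚ) ^ (m - k) *
          ((k.factorial : ℚ) / (l.factorial : ℚ)) * (numDerangements l : ℚ) := by
  calc (numDerangements (m + n) : ℚ) / n !
      = coeff n ((d⁄dX ℚ)^[m] derangementSeries) := by
        rw [derangementSeries, coeff_iterate_derivative_mk_div_factorial, add_comm]
    _ = ∑ k ∈ range (m + 1), (m.choose k : ℚ) * (-1) ^ (m - k) * k ! *
          ∑ l ∈ range (n + 1), numDerangements l / l ! * ((k + n - l - 1).choose (n - l) : ℚ) := by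
        rw [iterate_derivative_derangementSeries, map_sum]
        simp only [coeff_smul, smul_eq_mul, coeff_mul_invOneSubPow, coeff_derangementSeries]
    _ = _ := by
        simp_rw [mul_sum]
        rw [sum_comm]
        exact sum_congr rfl fun l _ => sum_congr rfl fun k _ => by ring
end

section
/- For all integers m, n ≥ 0, the harmonic numbers satisfy C(m+n, n) · H_{n+m} = ∑_{k=0}^{n} H_k · C(m+n-k-1, n-k) + H_m · C(m+n, n), as an identity of rational numbers. -/
/-!
Both `C(m+n, n) (H_{m+n} - H_m)` and the sum on the right-hand side satisfy Pascal's recurrence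
`u (m+1) (n+1) = u (m+1) n + u m (n+1)`, and they agree for `n = 0` (both vanish) and for `m = 0`
(both equal `H_n`), so they are equal. For the binomial side the recurrence comes from Pascal's rule
together with the absorption identity `C(N+1, n+1) / (N+1) = C(N, n+1) / (m+1)`, `N = m+n+1`; for
the sum it is Pascal's rule term by term. At `m = 0` the sum is `H_n` because truncated subtraction
in `ℕ` makes `C(n-k-1, n-k)` vanish for `k < n`.
-/

open Finset

theorem eq_of_pascal_recurrence {α : Type*} [Add α] {u v : ℕ → ℕ → α}
    (hu : ∀ m n, u (m + 1) (n + 1) = u (m + 1) n + u m (n + 1))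
    (hv : ∀ m n, v (m + 1) (n + 1) = v (m + 1) n + v m (n + 1))
    (h_zero_left : ∀ n, u 0 n = v 0 n) (h_zero_right : ∀ m, u m 0 = v m 0) :
    ∀ m n, u m n = v m n := by
  intro m
  induction m with
  | zero => exact h_zero_left
  | succ m ihm =>
    intro n
    induction n with
    | zero => exact h_zero_right _
    | succ n ihn => rw [hu, hv, ihn, ihm]

theorem choose_mul_harmonic_sub_pascal (m n : ℕ) :
    ((m + 1 + (n + 1)).choose (n + 1) : ℚ) * (harmonic (m + 1 + (n + 1)) - harmonic (m + 1)) =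
      ((m + 1 + n).choose n : ℚ) * (harmonic (m + 1 + n) - harmonic (m + 1)) +
        ((m + (n + 1)).choose (n + 1) : ℚ) * (harmonic (m + (n + 1)) - harmonic m) := by
  set N := m + n + 1
  rw [show m + 1 + (n + 1) = N + 1 by omega, show m + 1 + n = N by omega,
    show m + (n + 1) = N by omega]
  have pascal : ((N + 1).choose (n + 1) : ℚ) = N.choose n + N.choose (n + 1) := by
    exact_mod_cast Nat.choose_succ_succ' N n
  have absorb : ((N + 1).choose (n + 1) : ℚ) / (N + 1) = N.choose (n + 1) / (m + 1) := by
    rw [div_eq_div_iff (by positivity) (by positivity)]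
    have := Nat.choose_mul_succ_eq N (n + 1)
    rw [show N + 1 - (n + 1) = m + 1 by omega] at this
    exact_mod_cast this.symm
  rw [harmonic_succ N, harmonic_succ m]
  push_cast
  linear_combination (harmonic N - harmonic m - ((m : ℚ) + 1)⁻¹) * pascal + absorb

theorem sum_harmonic_mul_choose_pascal (m n : ℕ) :
    ∑ k ∈ range (n + 1 + 1), harmonic k * ((m + 1 + (n + 1) - k - 1).choose (n + 1 - k) : ℚ) =
      ∑ k ∈ range (n + 1), harmonic k * ((m + 1 + n - k - 1).choose (n - k) : ℚ) +
        ∑ k ∈ range (n + 1 + 1), harmonic k * ((m + (n + 1) - k - 1).choose (n + 1 - k) : ℚ) := by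
  have pascal_termwise :
      ∑ k ∈ range (n + 1), harmonic k * ((m + 1 + (n + 1) - k - 1).choose (n + 1 - k) : ℚ) =
        ∑ k ∈ range (n + 1), harmonic k * ((m + 1 + n - k - 1).choose (n - k) : ℚ) +
          ∑ k ∈ range (n + 1), harmonic k * ((m + (n + 1) - k - 1).choose (n + 1 - k) : ℚ) := by
    rw [← sum_add_distrib]
    refine sum_congr rfl fun k hk => ?_
    have hkn : k ≤ n := Nat.lt_succ_iff.mp (mem_range.mp hk)
    rw [← mul_add, ← Nat.cast_add, show n + 1 - k = n - k + 1 by omega,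
      show m + 1 + (n + 1) - k - 1 = m + n - k + 1 by omega,
      show m + 1 + n - k - 1 = m + n - k by omega, show m + (n + 1) - k - 1 = m + n - k by omega,
      Nat.choose_succ_succ']
  simp only [sum_range_succ _ (n + 1), Nat.sub_self, Nat.choose_zero_right]
  linear_combination pascal_termwise

/-- **Recurrence for harmonic numbers** (Theorem 2.2).
For all integers `m, n ≥ 0`,
`C(m+n, n) ⬝ H_{n+m} = ∑_{k=0}^{n} H_k ⬝ C(m+n-k-1, n-k) + H_m ⬝ C(m+n, n)`
as rational numbers. -/
theorem harmonic_recurrence (m n : ℕ) :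
    ((m + n).choose n : ℚ) * harmonic (n + m) =
      ∑ k ∈ Finset.range (n + 1), harmonic k * ((m + n - k - 1).choose (n - k) : ℚ) +
        harmonic m * ((m + n).choose n : ℚ) := by
  have key := eq_of_pascal_recurrence
    (u := fun m n ↦ ((m + n).choose n : ℚ) * (harmonic (m + n) - harmonic m))
    (v := fun m n ↦ ∑ k ∈ range (n + 1), harmonic k * ((m + n - k - 1).choose (n - k) : ℚ))
    choose_mul_harmonic_sub_pascal sum_harmonic_mul_choose_pascal (fun n ↦ ?_) (fun m ↦ ?_) m n
  · rw [add_comm n m]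
    linear_combination key
  · rw [sum_range_succ, sum_eq_zero fun k hk => ?_]
    · simp
    · rw [Nat.choose_eq_zero_of_lt (by grind), Nat.cast_zero, mul_zero]
  · simp
end

section
/- For all integers m ≥ 0 and n ≥ 0, the hyperharmonic number H_n^{(m+1)} satisfies H_n^{(m+1)} = ∑_{k=0}^{n} H_k · C(m+n-k-1, n-k), as an identity of rational numbers. -/
/-!
`H^{(r+1)}` is the sequence of partial sums of `H^{(r)}`, so `H^{(m+1)}` is obtained from
`H = H^{(1)}` by taking partial sums `m` times. Iterating partial sums `m` times weights `f k`
in the `n`-th term by the number of multisets of size `n - k` drawn from `m` elements, which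
is `C(m+n-k-1, n-k)`.
-/

/-- The hyperharmonic numbers `H_n^{(r)}` of Conway and Guy:
`H_0^{(r)} = 0` for all `r ≥ 0`, `H_n^{(0)} = 1/n` for `n ≥ 1`, and
`H_n^{(r)} = ∑_{k=1}^{n} H_k^{(r-1)}` for `n, r ≥ 1`. -/
def hyperharmonic : ℕ → ℕ → ℚ
  | 0, n => if n = 0 then 0 else (n : ℚ)⁻¹
  | r + 1, n => ∑ k ∈ Finset.Icc 1 n, hyperharmonic r k

open Finset

theorem Nat.multichoose_succ_eq_sum_range (m N : ℕ) :
    (m + 1).multichoose N = ∑ i ∈ range (N + 1), m.multichoose i := by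
  induction N with
  | zero => simp
  | succ N ih => rw [Nat.multichoose_succ_succ, ih, sum_range_succ _ (N + 1), add_comm]

section PartialSums

variable {M : Type*} [AddCommMonoid M]

def partialSums (f : ℕ → M) (n : ℕ) : M :=
  ∑ k ∈ range (n + 1), f k

theorem sum_Icc_one_eq_sum_range (f : ℕ → M) (n : ℕ) :
    ∑ k ∈ Icc 1 n, f k = ∑ i ∈ range n, f (i + 1) := by
  rw [← Ico_add_one_right_eq_Icc, sum_Ico_eq_sum_range, Nat.add_sub_cancel]
  simp only [add_comm]

theorem iterate_partialSums_apply (f : ℕ → M) (m n : ℕ) :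
    partialSums^[m] f n = ∑ k ∈ range (n + 1), m.multichoose (n - k) • f k := by
  induction m generalizing n with
  | zero =>
    rw [sum_eq_single_of_mem n (self_mem_range_succ n) fun k hk hkn => ?_]
    · simp
    · obtain ⟨d, hd⟩ : ∃ d, n - k = d + 1 :=
        Nat.exists_eq_add_one.mpr (by grind)
      rw [hd, Nat.multichoose_zero_succ, zero_smul]
  | succ m ih =>
    calc partialSums^[m + 1] f n
        = ∑ j ∈ range (n + 1), ∑ k ∈ range (j + 1), m.multichoose (j - k) • f k := by
          simp only [Function.iterate_succ_apply', partialSums, ih]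
      _ = ∑ k ∈ range (n + 1), ∑ i ∈ range (n + 1 - k), m.multichoose i • f k :=
          sum_range_diag_flip (n + 1) fun k i => m.multichoose i • f k
      _ = ∑ k ∈ range (n + 1), (m + 1).multichoose (n - k) • f k := by
          refine sum_congr rfl fun k hk => ?_
          rw [← sum_smul, Nat.multichoose_succ_eq_sum_range,
            Nat.sub_add_comm (mem_range_succ_iff.mp hk)]

end PartialSums

theorem hyperharmonic_zero_right (r : ℕ) : hyperharmonic r 0 = 0 := by
  cases r <;> simp [hyperharmonic]

theorem hyperharmonic_succ (r : ℕ) : hyperharmonic (r + 1) = partialSums (hyperharmonic r) := by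
  ext n
  rw [hyperharmonic, partialSums, sum_range_succ', hyperharmonic_zero_right, add_zero,
    sum_Icc_one_eq_sum_range]

theorem hyperharmonic_one : hyperharmonic 1 = harmonic := by
  ext n
  rw [hyperharmonic, harmonic, sum_Icc_one_eq_sum_range]
  simp [hyperharmonic]

theorem hyperharmonic_succ_eq_iterate (m : ℕ) :
    hyperharmonic (m + 1) = partialSums^[m] harmonic := by
  induction m with
  | zero => exact hyperharmonic_one
  | succ m ih => rw [hyperharmonic_succ, ih, Function.iterate_succ_apply']

/-- For all integers `m, n ≥ 0`,
`H_n^{(m+1)} = ∑_{k=0}^{n} H_k ⬝ C(m+n-k-1, n-k)` as rational numbers. -/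
theorem hyperharmonic_eq_sum_harmonic (m n : ℕ) :
    hyperharmonic (m + 1) n =
      ∑ k ∈ Finset.range (n + 1), harmonic k * ((m + n - k - 1).choose (n - k) : ℚ) := by
  rw [hyperharmonic_succ_eq_iterate, iterate_partialSums_apply]
  refine sum_congr rfl fun k hk => ?_
  have hkn : m + (n - k) - 1 = m + n - k - 1 := by grind
  rw [nsmul_eq_mul, mul_comm, Nat.multichoose_eq, hkn]
end

section
/- For every nonzero real number λ and all integers m, n ≥ 0, the degenerate harmonic numbers satisfy C(m+n, n) · H_{n+m,λ} = ∑_{k=0}^{n} H_{k,λ} · C(m+n-k-1, n-k) + H_{m,λ} · binom(m+n-λ, n), as an identity of real numbers. -/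
/-- The generalized binomial coefficient `binom(x, k) = x(x-1)⋯(x-k+1)/k!`
for a real number `x` and a natural number `k`. -/
noncomputable def genBinom (x : ℝ) (k : ℕ) : ℝ :=
  (∏ i ∈ Finset.range k, (x - i)) / (k.factorial : ℝ)

/-- The degenerate harmonic numbers: `H_{0,λ} = 0` and
`H_{n,λ} = ∑_{k=1}^{n} binom(λ-1, k-1) ⬝ (-1)^{k-1} / k` for `n ≥ 1`. -/
noncomputable def degHarmonic (lam : ℝ) (n : ℕ) : ℝ :=
  ∑ k ∈ Finset.Icc 1 n, genBinom (lam - 1) (k - 1) * (-1 : ℝ) ^ (k - 1) / (k : ℝ)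

/-!
Multiplying by `λ`, the telescoping identity `λ H_{m,λ} = 1 - binom(m-λ, m)` turns the
recurrence into three binomial identities: the Chu–Vandermonde convolution
`∑_k binom(k-λ, k) C(m+n-k-1, n-k) = binom(m+n-λ, n)` (both factors are multiset
coefficients, `binom(k-λ, k) = multichoose(1-λ, k)`), its case `λ = 0`, which is the hockey
stick `∑_k C(m+n-k-1, n-k) = C(m+n, n)`, and the splitting
`C(m+n, n) binom(x, m+n) = binom(x, n) binom(x-n, m)`.
-/

open Finset Polynomial

namespace Ring
variable {R : Type*} [CommRing R] [BinomialRing R]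

theorem multichoose_eq_negOnePow_smul_choose (r : R) (n : ℕ) :
    multichoose r n = Int.negOnePow n • choose (-r) n := by
  rw [choose_neg', smul_smul, ← Int.negOnePow_add, Int.negOnePow_even _ (by simp), one_smul]

theorem multichoose_add (r s : R) (n : ℕ) :
    multichoose (r + s) n = ∑ ij ∈ antidiagonal n, multichoose r ij.1 * multichoose s ij.2 := by
  rw [multichoose_eq_negOnePow_smul_choose, neg_add, add_choose_eq _ (Commute.all _ _), smul_sum]
  refine sum_congr rfl fun ij hij => ?_
  rw [← mem_antidiagonal.mp hij, multichoose_eq_negOnePow_smul_choose,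
    multichoose_eq_negOnePow_smul_choose, smul_mul_smul_comm, Nat.cast_add, Int.negOnePow_add]

theorem multichoose_natCast (m j : ℕ) : multichoose (m : R) j = Nat.multichoose m j := by
  cases j with
  | zero => simp [Nat.multichoose_zero_right]
  | succ k =>
    rw [multichoose_eq, Nat.multichoose_eq, show m + (k + 1) - 1 = m + k by omega,
      ← choose_natCast]
    push_cast; ring_nf

theorem choose_natCast_sub (r : R) (k : ℕ) :
    choose ((k : R) - r) k = (-1) ^ k * choose (r - 1) k := by
  rw [show (k : R) - r = -(r - k) by ring, choose_neg, sub_add_cancel, Units.smul_def,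
    Int.coe_negOnePow_natCast, zsmul_eq_mul]
  push_cast
  ring

theorem succ_mul_choose_succ (r : R) (k : ℕ) :
    (k + 1) * choose r (k + 1) = choose r k * (r - k) := by
  simpa [choose_one_right] using choose_smul_choose r (Nat.le_succ k)

end Ring

theorem genBinom_eq_choose (x : ℝ) (k : ℕ) : genBinom x k = Ring.choose x k := by
  rw [Ring.choose_eq_smul, ← aeval_eq_smeval, aeval_def, eval₂_eq_eval_map, descPochhammer_map,
    descPochhammer_eval_eq_prod_range, genBinom, smul_eq_mul, div_eq_inv_mul]

theorem degHarmonic_succ (lam : ℝ) (m : ℕ) :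
    degHarmonic lam (m + 1) = degHarmonic lam m + genBinom (lam - 1) m * (-1) ^ m / (m + 1) := by
  rw [degHarmonic, degHarmonic, sum_Icc_succ_top (by omega)]
  push_cast
  simp

theorem genBinom_sub_genBinom_succ (lam : ℝ) (m : ℕ) :
    genBinom (m - lam) m - genBinom ((m + 1 : ℕ) - lam) (m + 1) =
      lam * (genBinom (lam - 1) m * (-1) ^ m / (m + 1)) := by
  have hrec := Ring.succ_mul_choose_succ (lam - 1) m
  simp only [genBinom_eq_choose, Ring.choose_natCast_sub]
  rw [eq_div_of_mul_eq (by positivity) ((mul_comm _ _).trans hrec)]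
  field_simp
  ring

theorem mul_degHarmonic (lam : ℝ) (m : ℕ) :
    lam * degHarmonic lam m = 1 - genBinom (m - lam) m := by
  induction m with
  | zero => simp [degHarmonic, genBinom]
  | succ m ih =>
    rw [degHarmonic_succ, mul_add, ih, ← genBinom_sub_genBinom_succ]
    push_cast
    ring

theorem sum_genBinom_natCast_sub_mul_choose (x : ℝ) (m n : ℕ) :
    ∑ k ∈ range (n + 1), genBinom (k - x) k * ((m + n - k - 1).choose (n - k) : ℝ) =
      genBinom (m + n - x) n := by
  have hd (k : ℕ) : genBinom (k - x) k = Ring.multichoose (1 - x) k := by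
    rw [genBinom_eq_choose, Ring.multichoose_eq]; ring_nf
  have hc : ∀ k ∈ range (n + 1),
      ((m + n - k - 1).choose (n - k) : ℝ) = Ring.multichoose (m : ℝ) (n - k) := by
    intro k hk
    rw [Ring.multichoose_natCast, Nat.multichoose_eq,
      show m + (n - k) - 1 = m + n - k - 1 by have := mem_range.mp hk; omega]
  rw [sum_congr rfl fun k hk => by rw [hd, hc k hk],
    ← Nat.sum_antidiagonal_eq_sum_range_succ
      (fun i j => Ring.multichoose (1 - x) i * Ring.multichoose (m : ℝ) j),
    ← Ring.multichoose_add, Ring.multichoose_eq, genBinom_eq_choose]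
  ring_nf

theorem sum_choose_add_sub_sub_one (m n : ℕ) :
    ∑ k ∈ range (n + 1), ((m + n - k - 1).choose (n - k) : ℝ) = (m + n).choose n := by
  simpa only [sub_zero, genBinom_eq_choose, ← Nat.cast_add, Ring.choose_natCast, Nat.choose_self,
    Nat.cast_one, one_mul] using sum_genBinom_natCast_sub_mul_choose 0 m n

theorem choose_mul_genBinom_add (x : ℝ) (m n : ℕ) :
    ((m + n).choose n : ℝ) * genBinom x (m + n) = genBinom x n * genBinom (x - n) m := by
  simpa [genBinom_eq_choose] using Ring.choose_smul_choose x (Nat.le_add_left n m)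

/-- **Recurrence for degenerate harmonic numbers** (Theorem 2.3).
For every nonzero real `λ` and all integers `m, n ≥ 0`,
`C(m+n, n) ⬝ H_{n+m,λ} = ∑_{k=0}^{n} H_{k,λ} ⬝ C(m+n-k-1, n-k) + H_{m,λ} ⬝ binom(m+n-λ, n)`
as real numbers. -/
theorem degHarmonic_recurrence (lam : ℝ) (hlam : lam ≠ 0) (m n : ℕ) :
    ((m + n).choose n : ℝ) * degHarmonic lam (n + m) =
      ∑ k ∈ Finset.range (n + 1), degHarmonic lam k * ((m + n - k - 1).choose (n - k) : ℝ) +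
        degHarmonic lam m * genBinom ((m : ℝ) + (n : ℝ) - lam) n := by
  apply mul_left_cancel₀ hlam
  have hsplit : ((m + n).choose n : ℝ) * genBinom ((n + m : ℕ) - lam) (n + m) =
      genBinom (m - lam) m * genBinom (m + n - lam) n := by
    rw [add_comm n m, choose_mul_genBinom_add, mul_comm]
    congr 2 <;> push_cast <;> ring
  calc lam * (((m + n).choose n : ℝ) * degHarmonic lam (n + m))
      = ((m + n).choose n : ℝ) * (1 - genBinom ((n + m : ℕ) - lam) (n + m)) := by
        rw [mul_left_comm, mul_degHarmonic]
    _ = ∑ k ∈ range (n + 1),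
            (1 - genBinom (k - lam) k) * ((m + n - k - 1).choose (n - k) : ℝ) +
          (1 - genBinom (m - lam) m) * genBinom (m + n - lam) n := by
        simp only [sub_mul, one_mul, sum_sub_distrib, sum_choose_add_sub_sub_one,
          sum_genBinom_natCast_sub_mul_choose]
        linear_combination -hsplit
    _ = _ := by simp only [mul_add, mul_sum, ← mul_assoc, mul_degHarmonic]
end
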